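/- Let the charges $\{q_i\}$ be i.i.d. with $\mathbb{E}q_0^+$ and $\mathbb{E}q_0^-$ possibly infinite. If $d\ge 2$, then almost surely $\lim_{N\to\infty} \frac{1}{N^2}\max_S H_N(S) = \frac{(\mathbb{E}q_0^+)^2+(\mathbb{E}q_0^-)^2}{2}$, where the maximum is over all nearest-neighbor paths $S$ of length $N$ in $\mathbb{Z}^d$ starting at $0$, and the limit is interpreted in $[0,\infty]$. -/

import Mathlib

open MeasureTheory Filter Finset Real
open scoped ENNReal

noncomputable section

/-- Total charge at site `x` for charges `q` and path `S`, among monomers `0 ≤ i < N`. -/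
def Qof {d : ℕ} (N : ℕ) (q : ℕ → ℝ) (S : ℕ → Fin d → ℤ) (x : Fin d → ℤ) : ℝ :=
  ∑ i ∈ Finset.range N, if S i = x then q i else 0

/-- Energy `H_N = ∑_x (Q_N^x)²` (the sum over all of `ℤ^d` reduces to visited sites). -/
def Hof {d : ℕ} (N : ℕ) (q : ℕ → ℝ) (S : ℕ → Fin d → ℤ) : ℝ :=
  ∑ x ∈ (Finset.range N).image S, (Qof N q S x) ^ 2

/-- `v` is a unit step in `ℤ^d`. -/
def IsUnitStep {d : ℕ} (v : Fin d → ℤ) : Prop := (∑ j, |v j|) = 1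

/-- `S` is a nearest-neighbor path in `ℤ^d` starting at `0`. -/
def IsNNPath {d : ℕ} (S : ℕ → Fin d → ℤ) : Prop :=
  S 0 = 0 ∧ ∀ i, IsUnitStep (fun j => S (i + 1) j - S i j)

/-- Positive (`s = true`) or negative (`s = false`) part of a real charge. -/
def Qsgn (s : Bool) (r : ℝ) : ℝ := if s then max r 0 else max (-r) 0

/-- `Q_ε^p`: total charge of sign `s` at indices of parity `p`
(`p = true` means odd). -/
def Qpar (N : ℕ) (q : ℕ → ℝ) (p : Bool) (s : Bool) : ℝ :=
  ∑ i ∈ Finset.range N, if i % 2 = (if p then 1 else 0) then Qsgn s (q i) else 0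

/-- Maximum of the energy `H_N` over all nearest-neighbor paths from `0`. -/
def maxH (d N : ℕ) (q : ℕ → ℝ) : ℝ :=
  sSup {h : ℝ | ∃ S : ℕ → Fin d → ℤ, IsNNPath S ∧ h = Hof N q S}

open ProbabilityTheory

/-!
Along a nearest-neighbour path the coordinate sum of `S i` changes parity at every step, so
all visits to a given site happen at times of one parity. Splitting the charge at a site into
positive and negative parts and using `∑ₓ aₓ² ≤ (∑ₓ aₓ)²` for nonnegative `aₓ` bounds `H_N` by
the four squares `(Q_ε^p)²`; the bound is attained by a path running around a unit square that
puts the charges of each parity and sign on their own corner. The strong law of large numbers,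
extended by truncation to nonnegative variables of infinite mean and applied along each parity
class, gives `Q_ε^p / N → E q₀^ε / 2`.
-/

open scoped Topology

section Fibers

variable {ι α κ : Type*} [DecidableEq α] [DecidableEq κ]

lemma sum_sq_sum_fiberwise_le_sq_sum {s : Finset ι} {t : Finset α} {S : ι → α}
    (hS : ∀ i ∈ s, S i ∈ t) {w : ι → ℝ} (hw : ∀ i ∈ s, 0 ≤ w i) :
    ∑ x ∈ t, (∑ i ∈ s with S i = x, w i) ^ 2 ≤ (∑ i ∈ s, w i) ^ 2 := by
  rw [← Finset.sum_fiberwise_of_maps_to hS]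
  exact Finset.sum_sq_le_sq_sum_of_nonneg fun x _ =>
    Finset.sum_nonneg fun i hi => hw i (Finset.mem_filter.1 hi).1

lemma sq_sum_le_sum_sq_posPart_add_sq_negPart [Fintype κ] {s : Finset ι} {c : ι → κ}
    (hc : ∀ i ∈ s, ∀ j ∈ s, c i = c j) (q : ι → ℝ) :
    (∑ i ∈ s, q i) ^ 2 ≤
      ∑ p, ((∑ i ∈ s with c i = p, (q i)⁺) ^ 2 + (∑ i ∈ s with c i = p, (q i)⁻) ^ 2) := by
  rcases s.eq_empty_or_nonempty with rfl | ⟨i₀, hi₀⟩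
  · simp
  have hfilter : s.filter (c · = c i₀) = s := Finset.filter_true_of_mem fun j hj => hc j hj i₀ hi₀
  have hpos : 0 ≤ ∑ i ∈ s, (q i)⁺ := Finset.sum_nonneg fun i _ => posPart_nonneg _
  have hneg : 0 ≤ ∑ i ∈ s, (q i)⁻ := Finset.sum_nonneg fun i _ => negPart_nonneg _
  calc (∑ i ∈ s, q i) ^ 2 = (∑ i ∈ s, (q i)⁺ - ∑ i ∈ s, (q i)⁻) ^ 2 := by
        simp only [← Finset.sum_sub_distrib, posPart_sub_negPart]
    _ ≤ (∑ i ∈ s, (q i)⁺) ^ 2 + (∑ i ∈ s, (q i)⁻) ^ 2 := by nlinarith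
    _ = (∑ i ∈ s with c i = c i₀, (q i)⁺) ^ 2 + (∑ i ∈ s with c i = c i₀, (q i)⁻) ^ 2 := by
        rw [hfilter]
    _ ≤ _ := Finset.single_le_sum (f := fun p => (∑ i ∈ s with c i = p, (q i)⁺) ^ 2 +
          (∑ i ∈ s with c i = p, (q i)⁻) ^ 2) (fun p _ => by positivity) (Finset.mem_univ _)

theorem sum_sq_sum_fiberwise_le [Fintype κ] (s : Finset ι) {S : ι → α} {c : ι → κ}
    (hc : ∀ i ∈ s, ∀ j ∈ s, S i = S j → c i = c j) (q : ι → ℝ) :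
    ∑ x ∈ s.image S, (∑ i ∈ s with S i = x, q i) ^ 2 ≤
      ∑ p, ((∑ i ∈ s with c i = p, (q i)⁺) ^ 2 + (∑ i ∈ s with c i = p, (q i)⁻) ^ 2) := by
  calc _ ≤ ∑ x ∈ s.image S, ∑ p, ((∑ i ∈ s with c i = p ∧ S i = x, (q i)⁺) ^ 2 +
          (∑ i ∈ s with c i = p ∧ S i = x, (q i)⁻) ^ 2) := by
        gcongr with x
        have hcx : ∀ i ∈ s.filter (S · = x), ∀ j ∈ s.filter (S · = x), c i = c j := by
          simp only [Finset.mem_filter]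
          exact fun i hi j hj => hc i hi.1 j hj.1 (hi.2.trans hj.2.symm)
        simpa only [Finset.filter_filter, and_comm] using
          sq_sum_le_sum_sq_posPart_add_sq_negPart hcx q
    _ = ∑ p, (∑ x ∈ s.image S, (∑ i ∈ s with c i = p ∧ S i = x, (q i)⁺) ^ 2 +
          ∑ x ∈ s.image S, (∑ i ∈ s with c i = p ∧ S i = x, (q i)⁻) ^ 2) := by
        rw [Finset.sum_comm]
        simp only [Finset.sum_add_distrib]
    _ ≤ _ := by
        gcongr with p <;>
        · refine (le_of_eq ?_).trans (sum_sq_sum_fiberwise_le_sq_sum (s := s.filter (c · = p))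
            (fun i hi => Finset.mem_image_of_mem S (Finset.mem_filter.1 hi).1)
            fun i _ => by positivity)
          simp only [Finset.filter_filter]

lemma sum_filter_eq_sum_posPart (s : Finset ι) (c : ι → κ) (q : ι → ℝ) (p : κ) :
    ∑ i ∈ s with (c i, decide (0 ≤ q i)) = (p, true), q i = ∑ i ∈ s with c i = p, (q i)⁺ := by
  rw [Finset.sum_filter, Finset.sum_filter]
  refine Finset.sum_congr rfl fun i _ => ?_
  by_cases hq : 0 ≤ q i <;> by_cases hp : c i = p <;>
    simp [hq, hp, le_of_not_ge]

lemma sum_filter_eq_neg_sum_negPart (s : Finset ι) (c : ι → κ) (q : ι → ℝ) (p : κ) :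
    ∑ i ∈ s with (c i, decide (0 ≤ q i)) = (p, false), q i = -∑ i ∈ s with c i = p, (q i)⁻ := by
  rw [Finset.sum_filter, Finset.sum_filter, ← Finset.sum_neg_distrib]
  refine Finset.sum_congr rfl fun i _ => ?_
  by_cases hq : 0 ≤ q i <;> by_cases hp : c i = p <;>
    simp [hq, hp, le_of_not_ge]

theorem sum_sq_sum_fiberwise_eq_of_injective [Fintype κ] (s : Finset ι) (c : ι → κ) (q : ι → ℝ)
    {f : κ × Bool → α} (hf : Function.Injective f) :
    ∑ x ∈ s.image (fun i => f (c i, decide (0 ≤ q i))),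
        (∑ i ∈ s with f (c i, decide (0 ≤ q i)) = x, q i) ^ 2 =
      ∑ p, ((∑ i ∈ s with c i = p, (q i)⁺) ^ 2 + (∑ i ∈ s with c i = p, (q i)⁻) ^ 2) := by
  set g : ι → κ × Bool := fun i => (c i, decide (0 ≤ q i))
  calc _ = ∑ y ∈ s.image g, (∑ i ∈ s with g i = y, q i) ^ 2 := by
        rw [show s.image (fun i => f (c i, decide (0 ≤ q i))) = (s.image g).image f from
          Finset.image_image.symm, Finset.sum_image hf.injOn]
        simp only [hf.eq_iff]
        rfl
    _ = ∑ y, (∑ i ∈ s with g i = y, q i) ^ 2 := by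
        refine Finset.sum_subset (Finset.subset_univ _) fun y _ hy => ?_
        rw [Finset.filter_false_of_mem fun i hi (hgi : g i = y) =>
          hy (hgi ▸ Finset.mem_image_of_mem g hi)]
        simp
    _ = _ := by
        simp only [Fintype.sum_prod_type, Fintype.sum_bool, g, sum_filter_eq_sum_posPart,
          sum_filter_eq_neg_sum_negPart, neg_sq]

end Fibers

section Paths

variable {d : ℕ}

lemma IsUnitStep.cast_sum_eq_one {v : Fin d → ℤ} (hv : IsUnitStep v) :
    ((∑ j, v j : ℤ) : ZMod 2) = 1 := by
  have cast_abs : ∀ x : ℤ, ((|x| : ℤ) : ZMod 2) = x := fun x => by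
    rcases abs_choice x with h | h <;> simp [h, ZMod.neg_eq_self_mod_two]
  simpa [cast_abs] using congrArg (Int.cast : ℤ → ZMod 2) hv

lemma IsNNPath.cast_sum_eq {S : ℕ → Fin d → ℤ} (hS : IsNNPath S) (i : ℕ) :
    ((∑ j, S i j : ℤ) : ZMod 2) = i := by
  induction i with
  | zero => simp [hS.1]
  | succ i ih =>
    have h := (hS.2 i).cast_sum_eq_one
    push_cast [Finset.sum_sub_distrib] at h ih ⊢
    linear_combination h + ih

lemma IsNNPath.bodd_eq_of_eq {S : ℕ → Fin d → ℤ} (hS : IsNNPath S) {i j : ℕ} (h : S i = S j) :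
    i.bodd = j.bodd := by
  have hij := (hS.cast_sum_eq i).symm.trans (h ▸ hS.cast_sum_eq j)
  rw [ZMod.natCast_eq_natCast_iff', Nat.mod_two_of_bodd, Nat.mod_two_of_bodd] at hij
  revert hij
  cases i.bodd <;> cases j.bodd <;> simp

@[simp]
lemma isUnitStep_neg_iff {v : Fin d → ℤ} : IsUnitStep (-v) ↔ IsUnitStep v := by
  simp [IsUnitStep]

@[simp]
lemma isUnitStep_single (i : Fin d) : IsUnitStep (Pi.single i (1 : ℤ)) := by
  simp [IsUnitStep, Pi.single_apply, apply_ite]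

lemma isNNPath_sub_apply_zero {T : ℕ → Fin d → ℤ} (hT : ∀ i, IsUnitStep (T (i + 1) - T i)) :
    IsNNPath (fun i => T i - T 0) :=
  ⟨sub_self _, fun i => by simpa [IsUnitStep] using hT i⟩

def squareCorner (i₀ i₁ : Fin d) : Bool × Bool → Fin d → ℤ
  | (false, true) => 0
  | (false, false) => Pi.single i₀ 1 + Pi.single i₁ 1
  | (true, true) => Pi.single i₀ 1
  | (true, false) => Pi.single i₁ 1

lemma squareCorner_injective {i₀ i₁ : Fin d} (h : i₀ ≠ i₁) :
    Function.Injective (squareCorner i₀ i₁) := by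
  rintro ⟨p, s⟩ ⟨p', s'⟩ hps
  have h₀ := congrFun hps i₀
  have h₁ := congrFun hps i₁
  cases p <;> cases s <;> cases p' <;> cases s' <;>
    simp_all [squareCorner, h.symm]

lemma isUnitStep_squareCorner_sub (i₀ i₁ : Fin d) (p s s' : Bool) :
    IsUnitStep (squareCorner i₀ i₁ (!p, s') - squareCorner i₀ i₁ (p, s)) := by
  cases p <;> cases s <;> cases s' <;> simp [squareCorner]

end Paths

section Energy

variable {d : ℕ}

@[simp] lemma Qsgn_true (r : ℝ) : Qsgn true r = r⁺ := rfl

@[simp] lemma Qsgn_false (r : ℝ) : Qsgn false r = r⁻ := rfl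

lemma Qsgn_nonneg (s : Bool) (r : ℝ) : 0 ≤ Qsgn s r := by
  cases s <;> simp [Qsgn]

lemma Qpar_nonneg (N : ℕ) (q : ℕ → ℝ) (p s : Bool) : 0 ≤ Qpar N q p s :=
  Finset.sum_nonneg fun i _ => by split_ifs <;> simp [Qsgn_nonneg]

lemma measurable_Qsgn (s : Bool) : Measurable (Qsgn s) := by
  cases s
  · exact measurable_id.neg.max measurable_const
  · exact measurable_id.max measurable_const

lemma mod_two_eq_ite_iff (i : ℕ) (p : Bool) : i % 2 = (if p then 1 else 0) ↔ i.bodd = p := by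
  rw [Nat.mod_two_of_bodd]
  cases i.bodd <;> cases p <;> simp

lemma Qpar_eq_sum_filter (N : ℕ) (q : ℕ → ℝ) (p s : Bool) :
    Qpar N q p s = ∑ i ∈ range N with i.bodd = p, Qsgn s (q i) := by
  simp only [Qpar, Finset.sum_filter, mod_two_eq_ite_iff]

lemma Hof_eq_sum_filter (N : ℕ) (q : ℕ → ℝ) (S : ℕ → Fin d → ℤ) :
    Hof N q S = ∑ x ∈ (range N).image S, (∑ i ∈ range N with S i = x, q i) ^ 2 := by
  simp only [Hof, Qof, Finset.sum_filter]

lemma sum_sq_Qpar_eq (N : ℕ) (q : ℕ → ℝ) :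
    ∑ p, ∑ s, Qpar N q p s ^ 2 = ∑ p, ((∑ i ∈ range N with i.bodd = p, (q i)⁺) ^ 2 +
      (∑ i ∈ range N with i.bodd = p, (q i)⁻) ^ 2) := by
  simp [Qpar_eq_sum_filter, add_comm]

lemma Hof_le_sum_sq_Qpar (N : ℕ) (q : ℕ → ℝ) {S : ℕ → Fin d → ℤ} (hS : IsNNPath S) :
    Hof N q S ≤ ∑ p, ∑ s, Qpar N q p s ^ 2 := by
  rw [Hof_eq_sum_filter, sum_sq_Qpar_eq]
  exact sum_sq_sum_fiberwise_le _ (fun i _ j _ h => hS.bodd_eq_of_eq h) q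

def chargeSortingPath (i₀ i₁ : Fin d) (q : ℕ → ℝ) (i : ℕ) : Fin d → ℤ :=
  squareCorner i₀ i₁ (i.bodd, decide (0 ≤ q i)) - squareCorner i₀ i₁ (false, decide (0 ≤ q 0))

lemma isNNPath_chargeSortingPath (i₀ i₁ : Fin d) (q : ℕ → ℝ) :
    IsNNPath (chargeSortingPath i₀ i₁ q) :=
  isNNPath_sub_apply_zero fun i => by
    simpa only [Nat.bodd_succ] using isUnitStep_squareCorner_sub i₀ i₁ _ _ _

lemma Hof_chargeSortingPath {i₀ i₁ : Fin d} (h : i₀ ≠ i₁) (N : ℕ) (q : ℕ → ℝ) :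
    Hof N q (chargeSortingPath i₀ i₁ q) = ∑ p, ∑ s, Qpar N q p s ^ 2 := by
  rw [Hof_eq_sum_filter, sum_sq_Qpar_eq, ← sum_sq_sum_fiberwise_eq_of_injective _ _ q
    (sub_left_injective.comp (squareCorner_injective h) :
      Function.Injective fun y =>
        squareCorner i₀ i₁ y - squareCorner i₀ i₁ (false, decide (0 ≤ q 0)))]
  rfl

theorem maxH_eq_sum_sq_Qpar (hd : 2 ≤ d) (N : ℕ) (q : ℕ → ℝ) :
    maxH d N q = ∑ p, ∑ s, Qpar N q p s ^ 2 := by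
  have hmem : ∑ p, ∑ s, Qpar N q p s ^ 2 ∈
      {h : ℝ | ∃ S : ℕ → Fin d → ℤ, IsNNPath S ∧ h = Hof N q S} :=
    ⟨_, isNNPath_chargeSortingPath ⟨0, by omega⟩ ⟨1, by omega⟩ q,
      (Hof_chargeSortingPath (by simp) N q).symm⟩
  have hub : ∀ h ∈ {h : ℝ | ∃ S : ℕ → Fin d → ℤ, IsNNPath S ∧ h = Hof N q S},
      h ≤ ∑ p, ∑ s, Qpar N q p s ^ 2 := by
    rintro h ⟨S, hS, rfl⟩
    exact Hof_le_sum_sq_Qpar N q hS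
  exact le_antisymm (csSup_le ⟨_, hmem⟩ hub) (le_csSup ⟨_, hub⟩ hmem)

lemma ofReal_maxH_div_sq (hd : 2 ≤ d) (N : ℕ) (q : ℕ → ℝ) :
    ENNReal.ofReal (maxH d N q / (N : ℝ) ^ 2) =
      ∑ p, ∑ s, ENNReal.ofReal (Qpar N q p s / N) ^ 2 := by
  simp only [maxH_eq_sum_sq_Qpar hd, Finset.sum_div, ← div_pow]
  rw [ENNReal.ofReal_sum_of_nonneg fun p _ => Finset.sum_nonneg fun s _ => sq_nonneg _]
  simp only [ENNReal.ofReal_sum_of_nonneg fun s _ => sq_nonneg _,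
    ENNReal.ofReal_pow (div_nonneg (Qpar_nonneg _ _ _ _) N.cast_nonneg)]

end Energy

section StrongLaw

variable {Ω : Type*} [MeasurableSpace Ω] {μ : Measure Ω}

lemma integrable_min_const [IsFiniteMeasure μ] {X : Ω → ℝ} (hX : Measurable X)
    (hnn : ∀ ω, 0 ≤ X ω) (c : ℝ) : Integrable (fun ω => min (X ω) c) μ :=
  (integrable_const |c|).mono' (hX.min measurable_const).aestronglyMeasurable <|
    Eventually.of_forall fun ω => abs_le.2
      ⟨le_min ((neg_nonpos.2 (abs_nonneg c)).trans (hnn ω)) (neg_abs_le c),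
        (min_le_right _ _).trans (le_abs_self c)⟩

lemma tendsto_integral_min_atTop [IsFiniteMeasure μ] {X : Ω → ℝ} (hX : Measurable X)
    (hnn : ∀ ω, 0 ≤ X ω) (htop : ∫⁻ ω, ENNReal.ofReal (X ω) ∂μ = ∞) :
    Tendsto (fun M : ℕ => ∫ ω, min (X ω) M ∂μ) atTop atTop := by
  rw [← ENNReal.tendsto_ofReal_nhds_top, ← htop]
  simp_rw [ofReal_integral_eq_lintegral_ofReal (integrable_min_const hX hnn _)
    (Eventually.of_forall fun ω => le_min (hnn ω) (Nat.cast_nonneg _))]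
  refine lintegral_tendsto_of_tendsto_of_monotone
    (fun M => (hX.min measurable_const).ennreal_ofReal.aemeasurable)
    (Eventually.of_forall fun ω M M' hM => ENNReal.ofReal_le_ofReal
      (min_le_min_left _ (Nat.mono_cast hM)))
    (Eventually.of_forall fun ω => (ENNReal.continuous_ofReal.tendsto _).comp ?_)
  refine tendsto_const_nhds.congr' ?_
  filter_upwards [eventually_ge_atTop ⌈X ω⌉₊] with M hM
  exact (min_eq_left ((Nat.le_ceil _).trans (Nat.mono_cast hM))).symm

lemma tendsto_avg_atTop_of_lintegral_eq_top [IsFiniteMeasure μ] (X : ℕ → Ω → ℝ)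
    (hX : ∀ i, Measurable (X i)) (hnn : ∀ i ω, 0 ≤ X i ω) (hindep : Pairwise fun i j => X i ⟂ᵢ[μ] X j)
    (hident : ∀ i, IdentDistrib (X i) (X 0) μ μ)
    (htop : ∫⁻ ω, ENNReal.ofReal (X 0 ω) ∂μ = ∞) :
    ∀ᵐ ω ∂μ, Tendsto (fun n : ℕ => (∑ i ∈ range n, X i ω) / n) atTop atTop := by
  have htrunc : ∀ᵐ ω ∂μ, ∀ M : ℕ, Tendsto (fun n : ℕ => (∑ i ∈ range n, min (X i ω) M) / n)
      atTop (𝓝 (∫ ω, min (X 0 ω) M ∂μ)) := by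
    refine ae_all_iff.2 fun M => strong_law_ae_real (fun i ω => min (X i ω) M)
      (integrable_min_const (hX 0) (hnn 0) _) (fun i j hij => ?_) fun i => ?_
    · exact (hindep hij).comp (measurable_id.min measurable_const)
        (measurable_id.min measurable_const)
    · exact (hident i).comp (measurable_id.min measurable_const)
  filter_upwards [htrunc] with ω hω
  refine tendsto_atTop.2 fun b => ?_
  obtain ⟨M, hM⟩ :=
    ((tendsto_integral_min_atTop (hX 0) (hnn 0) htop).eventually_gt_atTop b).exists
  filter_upwards [(hω M).eventually (eventually_gt_nhds hM)] with n hn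
  exact hn.le.trans (div_le_div_of_nonneg_right
    (Finset.sum_le_sum fun i _ => min_le_left _ _) n.cast_nonneg)

theorem tendsto_ofReal_avg [IsFiniteMeasure μ] (X : ℕ → Ω → ℝ) (hX : ∀ i, Measurable (X i))
    (hnn : ∀ i ω, 0 ≤ X i ω) (hindep : Pairwise fun i j => X i ⟂ᵢ[μ] X j)
    (hident : ∀ i, IdentDistrib (X i) (X 0) μ μ) :
    ∀ᵐ ω ∂μ, Tendsto (fun n : ℕ => ENNReal.ofReal ((∑ i ∈ range n, X i ω) / n)) atTop
      (𝓝 (∫⁻ ω, ENNReal.ofReal (X 0 ω) ∂μ)) := by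
  by_cases hint : Integrable (X 0) μ
  · rw [← ofReal_integral_eq_lintegral_ofReal hint (Eventually.of_forall (hnn 0))]
    filter_upwards [strong_law_ae_real X hint hindep hident] with ω hω
    exact (ENNReal.continuous_ofReal.tendsto _).comp hω
  · have htop : ∫⁻ ω, ENNReal.ofReal (X 0 ω) ∂μ = ∞ := by
      by_contra h
      exact hint ((lintegral_ofReal_ne_top_iff_integrable (hX 0).aestronglyMeasurable
        (Eventually.of_forall (hnn 0))).1 h)
    rw [htop]
    filter_upwards [tendsto_avg_atTop_of_lintegral_eq_top X hX hnn hindep hident htop]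
      with ω hω
    exact ENNReal.tendsto_ofReal_nhds_top.2 hω

lemma sum_range_filter_mod_two_eq {M : Type*} [AddCommMonoid M] (N : ℕ) {v : ℕ} (hv : v < 2)
    (g : ℕ → M) :
    ∑ i ∈ range N with i % 2 = v, g i = ∑ k ∈ range ((N + 1 - v) / 2), g (2 * k + v) := by
  refine (Finset.sum_nbij' (fun k => 2 * k + v) (· / 2) ?_ ?_ ?_ ?_ fun _ _ => rfl).symm <;>
    intro a ha <;> simp only [Finset.mem_filter, Finset.mem_range] at ha ⊢ <;> omega

lemma tendsto_sub_div_two_div (v : ℕ) :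
    Tendsto (fun N : ℕ => (((N + 1 - v) / 2 : ℕ) : ℝ) / N) atTop (𝓝 (1 / 2)) := by
  have hlow : Tendsto (fun N : ℕ => (1 - (v : ℝ) / N) / 2) atTop (𝓝 (1 / 2)) := by
    simpa using ((tendsto_const_nhds (x := (1 : ℝ))).sub
      (tendsto_const_div_atTop_nhds_zero_nat (v : ℝ))).div_const 2
  have hup : Tendsto (fun N : ℕ => (1 + 1 / (N : ℝ)) / 2) atTop (𝓝 (1 / 2)) := by
    simpa using ((tendsto_const_nhds (x := (1 : ℝ))).add
      (tendsto_const_div_atTop_nhds_zero_nat (1 : ℝ))).div_const 2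
  refine tendsto_of_tendsto_of_tendsto_of_le_of_le' hlow hup ?_ ?_ <;>
    filter_upwards [eventually_gt_atTop 0] with N hN <;>
    have hN' : (0 : ℝ) < N := Nat.cast_pos.2 hN
  · have h : (N : ℝ) ≤ 2 * ((N + 1 - v) / 2 : ℕ) + v := by
      exact_mod_cast (by omega : N ≤ 2 * ((N + 1 - v) / 2) + v)
    rw [le_div_iff₀ hN']
    field_simp
    linarith
  · have h : 2 * (((N + 1 - v) / 2 : ℕ) : ℝ) ≤ N + 1 := by
      exact_mod_cast (by omega : 2 * ((N + 1 - v) / 2) ≤ N + 1)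
    rw [div_le_iff₀ hN']
    field_simp
    linarith

theorem tendsto_ofReal_sum_filter_mod_two_div [IsFiniteMeasure μ] (X : ℕ → Ω → ℝ)
    (hX : ∀ i, Measurable (X i)) (hnn : ∀ i ω, 0 ≤ X i ω) (hindep : iIndepFun X μ)
    (hident : ∀ i, IdentDistrib (X i) (X 0) μ μ) {v : ℕ} (hv : v < 2) :
    ∀ᵐ ω ∂μ, Tendsto (fun N : ℕ => ENNReal.ofReal ((∑ i ∈ range N with i % 2 = v, X i ω) / N))
      atTop (𝓝 ((∫⁻ ω, ENNReal.ofReal (X 0 ω) ∂μ) / 2)) := by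
  have hm : Tendsto (fun N => (N + 1 - v) / 2) atTop atTop :=
    tendsto_atTop_atTop.2 fun b => ⟨2 * b + v, fun N hN => by omega⟩
  have hL : ∫⁻ ω, ENNReal.ofReal (X (2 * 0 + v) ω) ∂μ = ∫⁻ ω, ENNReal.ofReal (X 0 ω) ∂μ :=
    ((hident _).comp ENNReal.measurable_ofReal).lintegral_eq
  have hsub := tendsto_ofReal_avg (fun k => X (2 * k + v)) (fun k => hX _) (fun k => hnn _)
    (fun k l hkl => hindep.indepFun (by omega)) fun k => (hident _).trans (hident _).symm
  filter_upwards [hsub] with ω hω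
  have hprod := ENNReal.Tendsto.mul (hω.comp hm) (Or.inr ENNReal.ofReal_ne_top)
    ((ENNReal.continuous_ofReal.tendsto _).comp (tendsto_sub_div_two_div v)) (Or.inl (by simp))
  rw [hL, ENNReal.ofReal_div_of_pos two_pos, ENNReal.ofReal_one, ENNReal.ofReal_ofNat,
    ← mul_div_assoc, mul_one] at hprod
  refine hprod.congr' ?_
  filter_upwards [eventually_ge_atTop 2] with N hN
  have hm0 : (((N + 1 - v) / 2 : ℕ) : ℝ) ≠ 0 := Nat.cast_ne_zero.2 (by omega)
  rw [Function.comp_apply, Function.comp_apply,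
    ← ENNReal.ofReal_mul (div_nonneg (Finset.sum_nonneg fun k _ => hnn _ _) (Nat.cast_nonneg _)),
    div_mul_div_cancel₀ hm0, sum_range_filter_mod_two_eq N hv]

end StrongLaw

lemma ENNReal.two_mul_add_div_two_sq (a b : ℝ≥0∞) :
    2 * ((a / 2) ^ 2 + (b / 2) ^ 2) = (a ^ 2 + b ^ 2) / 2 := by
  simp only [div_eq_mul_inv]
  calc _ = 2 * 2⁻¹ * ((a ^ 2 + b ^ 2) * 2⁻¹) := by ring
    _ = _ := by rw [ENNReal.mul_inv_cancel two_ne_zero ENNReal.ofNat_ne_top, one_mul]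

/-- for i.i.d. charges (with `E q₀⁺, E q₀⁻ ∈ [0,∞]` possibly
infinite) and `d ≥ 2`, almost surely
`max_S H_N / N² → ((E q₀⁺)² + (E q₀⁻)²)/2` in `[0,∞]`. -/
theorem maxH_asymptotics {d : ℕ} (hd : 2 ≤ d) {Ω : Type*} [MeasurableSpace Ω]
    (P : Measure Ω) [IsProbabilityMeasure P] (q : ℕ → Ω → ℝ)
    (hmeas : ∀ i, Measurable (q i))
    (hindep : iIndepFun q P)
    (hident : ∀ i, Measure.map (q i) P = Measure.map (q 0) P) :
    ∀ᵐ ω ∂P, Tendsto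
      (fun N : ℕ => ENNReal.ofReal (maxH d N (fun i => q i ω) / (N : ℝ) ^ 2))
      atTop
      (nhds (((∫⁻ ω', ENNReal.ofReal (max (q 0 ω') 0) ∂P) ^ 2 +
        (∫⁻ ω', ENNReal.ofReal (max (-q 0 ω') 0) ∂P) ^ 2) / 2)) := by
  have hlim : ∀ᵐ ω ∂P, ∀ p s : Bool, Tendsto
      (fun N : ℕ => ENNReal.ofReal (Qpar N (fun i => q i ω) p s / N)) atTop
      (𝓝 ((∫⁻ ω', ENNReal.ofReal (Qsgn s (q 0 ω')) ∂P) / 2)) := by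
    refine ae_all_iff.2 fun p => ae_all_iff.2 fun s => ?_
    simpa only [Qpar, ← Finset.sum_filter] using tendsto_ofReal_sum_filter_mod_two_div
      (fun i ω => Qsgn s (q i ω)) (fun i => (measurable_Qsgn s).comp (hmeas i))
      (fun i ω => Qsgn_nonneg s _) (hindep.comp _ fun _ => measurable_Qsgn s)
      (fun i => IdentDistrib.comp ⟨(hmeas i).aemeasurable, (hmeas 0).aemeasurable, hident i⟩
        (measurable_Qsgn s)) (by split <;> norm_num)
  filter_upwards [hlim] with ω hω
  have hsum := tendsto_finsetSum (univ : Finset Bool) fun p _ =>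
    tendsto_finsetSum (univ : Finset Bool) fun s _ => ENNReal.Tendsto.pow (n := 2) (hω p s)
  convert hsum using 2 with N
  · exact ofReal_maxH_div_sq hd N _
  · simp only [Finset.sum_const, Finset.card_univ, Fintype.card_bool, Fintype.sum_bool,
      nsmul_eq_mul, Nat.cast_ofNat, ENNReal.two_mul_add_div_two_sq]
    rfl
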